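/- Let V ⊆ ℤ^d be partitioned into cells Q_a = φ^{-1}(a) ∩ V where φ : ℤ^d → ℤ^d is monotone (a ≤ b implies φ(a) ≤ φ(b)). Let a₁, ..., a_q enumerate the nonempty cell indices, and suppose both {a₁,...,a_{i-1}} and {a₁,...,a_i} are monotone (downward-closed under componentwise ≤) in {a₁,...,a_q}. If W is monotone in Q_{a_i}, then Q_{a_1} ∪ ... ∪ Q_{a_{i-1}} ∪ W is monotone in V. -/

import Mathlib

/-!
If `x ≤ y` with `y` in a cell `Q_{a_j}`, then `φ x ≤ a_j`, so `φ x` lies in whichever monotone set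
of indices contains `a_j`: the union of cells over a monotone set of indices is monotone in `V`.
Applied to `{a_j | j < i}` and `{a_j | j ≤ i}`, the only case left is `φ x = a_i`, where the
monotonicity of `W` in `Q_{a_i}` takes over.
-/

/-- `S` is monotone (downward closed under the componentwise order) in `T`. -/
def MonotoneIn {d : ℕ} (S T : Set (Fin d → ℤ)) : Prop :=
  ∀ x ∈ T, ∀ y ∈ S, x ≤ y → x ∈ S

namespace MonotoneIn

variable {d e : ℕ}

theorem sep_preimage {S T : Set (Fin e → ℤ)} (hS : MonotoneIn S T) {φ : (Fin d → ℤ) → (Fin e → ℤ)}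
    (hφ : Monotone φ) {V : Set (Fin d → ℤ)} (hV : φ '' V ⊆ T) :
    MonotoneIn {x ∈ V | φ x ∈ S} V :=
  fun x hx y hy hxy => ⟨hx, hS (φ x) (hV ⟨x, hx, rfl⟩) (φ y) hy.2 (hφ hxy)⟩

theorem union_of_subset {P C W V : Set (Fin d → ℤ)} (hP : MonotoneIn P V)
    (hPC : MonotoneIn (P ∪ C) V) (hWC : W ⊆ C) (hW : MonotoneIn W C) :
    MonotoneIn (P ∪ W) V := by
  rintro x hx y (hyP | hyW) hxy
  · exact Or.inl (hP x hx y hyP hxy)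
  · rcases hPC x hx y (Or.inr (hWC hyW)) hxy with hxP | hxC
    · exact Or.inl hxP
    · exact Or.inr (hW x hxC y hyW hxy)

end MonotoneIn

theorem Set.sep_mem_image_eq_biUnion {α β ι : Type*} (V : Set α) (φ : α → β) (a : ι → β)
    (s : Set ι) : {x ∈ V | φ x ∈ a '' s} = ⋃ j ∈ s, {x ∈ V | φ x = a j} := by
  ext x
  simp only [Set.mem_iUnion, exists_prop, Set.mem_ofPred_eq, Set.mem_image, eq_comm (b := φ x)]
  tauto

theorem stmt13_general (d : ℕ) (V : Set (Fin d → ℤ)) (φ : (Fin d → ℤ) → (Fin d → ℤ))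
    (hφ : Monotone φ) (q : ℕ) (a : Fin q → (Fin d → ℤ))
    (hrange : φ '' V = Set.range a) (i : Fin q)
    (hpre1 : MonotoneIn (a '' {j | j < i}) (Set.range a))
    (hpre2 : MonotoneIn (a '' {j | j ≤ i}) (Set.range a))
    (W : Set (Fin d → ℤ)) (hW : W ⊆ {x ∈ V | φ x = a i})
    (hWmono : MonotoneIn W {x ∈ V | φ x = a i}) :
    MonotoneIn ((⋃ j ∈ {j : Fin q | j < i}, {x ∈ V | φ x = a j}) ∪ W) V := by
  have hIic : {j : Fin q | j ≤ i} = insert i {j | j < i} := Set.Iio_insert.symm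
  have hcells : {x ∈ V | φ x ∈ a '' {j | j ≤ i}} =
      {x ∈ V | φ x ∈ a '' {j | j < i}} ∪ {x ∈ V | φ x = a i} := by
    rw [hIic, Set.image_insert_eq, ← Set.sep_or]
    simp only [Set.mem_insert_iff, or_comm]
  rw [← Set.sep_mem_image_eq_biUnion]
  exact (hpre1.sep_preimage hφ hrange.le).union_of_subset
    (hcells ▸ hpre2.sep_preimage hφ hrange.le) hW hWmono

/-- Lemma `lemmon`: a lexicographic prefix of coarse cells together with a
monotone subset of the next cell is monotone in `V`. -/
theorem stmt13 (d : ℕ) (V : Set (Fin d → ℤ)) (φ : (Fin d → ℤ) → (Fin d → ℤ))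
    (hφ : Monotone φ) (q : ℕ) (a : Fin q → (Fin d → ℤ)) (hinj : Function.Injective a)
    (hrange : φ '' V = Set.range a) (i : Fin q)
    (hpre1 : MonotoneIn (a '' {j | j < i}) (Set.range a))
    (hpre2 : MonotoneIn (a '' {j | j ≤ i}) (Set.range a))
    (W : Set (Fin d → ℤ)) (hW : W ⊆ {x ∈ V | φ x = a i})
    (hWmono : MonotoneIn W {x ∈ V | φ x = a i}) :
    MonotoneIn ((⋃ j ∈ {j : Fin q | j < i}, {x ∈ V | φ x = a j}) ∪ W) V :=
  stmt13_general d V φ hφ q a hrange i hpre1 hpre2 W hW hWmono
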